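/- The GHZ state and the W state are not SLOCC-equivalent: there do not exist g₁, g₂, g₃ ∈ SL(2,ℂ) such that (g₁,g₂,g₃)·GHZ = W, where GHZ is the 3-qubit state with GHZ₀₀₀ = GHZ₁₁₁ = 1/√2 and all other components zero, and W is the 3-qubit state with W₀₀₁ = W₀₁₀ = W₁₀₀ = 1/√3 and all other components zero. -/

import Mathlib

/-- A 3-qubit state: a map `Fin 2 → Fin 2 → Fin 2 → ℂ` with components `a i j k`. -/
abbrev QState3 : Type := Fin 2 → Fin 2 → Fin 2 → ℂ

/-- The action of the SLOCC-equivalence group `SL(2,ℂ)×SL(2,ℂ)×SL(2,ℂ)` on 3-qubit states: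
`((g₁,g₂,g₃)·a)_{ijk} = Σ (g₁)_{ii'} (g₂)_{jj'} (g₃)_{kk'} a_{i'j'k'}`. -/
noncomputable def sloccAct (g₁ g₂ g₃ : Matrix.SpecialLinearGroup (Fin 2) ℂ) (a : QState3) : QState3 :=
  fun i j k => ∑ i' : Fin 2, ∑ j' : Fin 2, ∑ k' : Fin 2,
    (g₁ : Matrix (Fin 2) (Fin 2) ℂ) i i' * (g₂ : Matrix (Fin 2) (Fin 2) ℂ) j j' *
      (g₃ : Matrix (Fin 2) (Fin 2) ℂ) k k' * a i' j' k'

/-- The quartic norm `q` of a 3-qubit state (Cayley's hyperdeterminant up to scale). -/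
def quarticQ3 (a : QState3) : ℂ :=
  -2 * (a 1 1 1 * a 0 0 0 -
      (a 0 0 1 * a 1 1 0 + a 0 1 0 * a 1 0 1 + a 1 0 0 * a 0 1 1)) ^ 2 -
    8 * (a 1 1 1 * a 0 0 1 * a 0 1 0 * a 1 0 0 + a 0 0 0 * a 1 1 0 * a 1 0 1 * a 0 1 1 -
      (a 0 1 0 * a 1 0 0 * a 1 0 1 * a 0 1 1 + a 0 0 1 * a 1 0 0 * a 1 1 0 * a 0 1 1 +
        a 0 0 1 * a 0 1 0 * a 1 1 0 * a 1 0 1))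

/-- The symplectic (antisymmetric bilinear) form of two 3-qubit states. -/
def symplQ3 (a b : QState3) : ℂ :=
  a 1 1 1 * b 0 0 0 - a 0 0 0 * b 1 1 1 +
    (a 0 0 1 * b 1 1 0 + a 0 1 0 * b 1 0 1 + a 1 0 0 * b 0 1 1) -
    (a 1 1 0 * b 0 0 1 + a 1 0 1 * b 0 1 0 + a 0 1 1 * b 1 0 0)

/-- The GHZ state `(|000⟩ + |111⟩)/√2`. -/
noncomputable def GHZstate : QState3 := fun i j k =>
  if (i, j, k) = (0, 0, 0) ∨ (i, j, k) = (1, 1, 1) then 1 / Real.sqrt 2 else 0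

/-- The W state `(|001⟩ + |010⟩ + |100⟩)/√3`. -/
noncomputable def Wstate : QState3 := fun i j k =>
  if (i, j, k) = (0, 0, 1) ∨ (i, j, k) = (0, 1, 0) ∨ (i, j, k) = (1, 0, 0) then
    1 / Real.sqrt 3
  else 0

/-- Invariance of the quartic in the first factor. -/
lemma quartic_act1 (g : Matrix (Fin 2) (Fin 2) ℂ) (a : QState3) :
    quarticQ3 (fun i j k => g i 0 * a 0 j k + g i 1 * a 1 j k)
      = (g 0 0 * g 1 1 - g 0 1 * g 1 0) ^ 2 * quarticQ3 a := by
  simp only [quarticQ3]; ring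

lemma quartic_act2 (g : Matrix (Fin 2) (Fin 2) ℂ) (a : QState3) :
    quarticQ3 (fun i j k => g j 0 * a i 0 k + g j 1 * a i 1 k)
      = (g 0 0 * g 1 1 - g 0 1 * g 1 0) ^ 2 * quarticQ3 a := by
  simp only [quarticQ3]; ring

lemma quartic_act3 (g : Matrix (Fin 2) (Fin 2) ℂ) (a : QState3) :
    quarticQ3 (fun i j k => g k 0 * a i j 0 + g k 1 * a i j 1)
      = (g 0 0 * g 1 1 - g 0 1 * g 1 0) ^ 2 * quarticQ3 a := by
  simp only [quarticQ3]; ring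

lemma det_expr (g : Matrix.SpecialLinearGroup (Fin 2) ℂ) :
    (g : Matrix (Fin 2) (Fin 2) ℂ) 0 0 * (g : Matrix (Fin 2) (Fin 2) ℂ) 1 1 -
      (g : Matrix (Fin 2) (Fin 2) ℂ) 0 1 * (g : Matrix (Fin 2) (Fin 2) ℂ) 1 0 = 1 := by
  rw [← Matrix.det_fin_two]; exact g.2

lemma quartic_sloccAct (g₁ g₂ g₃ : Matrix.SpecialLinearGroup (Fin 2) ℂ) (a : QState3) :
    quarticQ3 (sloccAct g₁ g₂ g₃ a) = quarticQ3 a := by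
  set b₃ : QState3 := fun i j k =>
    (g₃ : Matrix (Fin 2) (Fin 2) ℂ) k 0 * a i j 0 +
      (g₃ : Matrix (Fin 2) (Fin 2) ℂ) k 1 * a i j 1 with hb₃
  set b₂ : QState3 := fun i j k =>
    (g₂ : Matrix (Fin 2) (Fin 2) ℂ) j 0 * b₃ i 0 k +
      (g₂ : Matrix (Fin 2) (Fin 2) ℂ) j 1 * b₃ i 1 k with hb₂
  have hact : sloccAct g₁ g₂ g₃ a = fun i j k =>
      (g₁ : Matrix (Fin 2) (Fin 2) ℂ) i 0 * b₂ 0 j k +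
        (g₁ : Matrix (Fin 2) (Fin 2) ℂ) i 1 * b₂ 1 j k := by
    funext i j k
    simp only [hb₂, hb₃, sloccAct, Fin.sum_univ_two]
    ring
  rw [hact, quartic_act1 (g₁ : Matrix (Fin 2) (Fin 2) ℂ) b₂, det_expr, hb₂,
    quartic_act2 (g₂ : Matrix (Fin 2) (Fin 2) ℂ) b₃, det_expr, hb₃,
    quartic_act3 (g₃ : Matrix (Fin 2) (Fin 2) ℂ) a, det_expr]
  ring

/-- The GHZ and W states are not SLOCC-equivalent. -/
theorem GHZ_W_not_SLOCC_equivalent :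
    ¬ ∃ g₁ g₂ g₃ : Matrix.SpecialLinearGroup (Fin 2) ℂ,
        sloccAct g₁ g₂ g₃ GHZstate = Wstate := by
  rintro ⟨g₁, g₂, g₃, h⟩
  have hq : quarticQ3 GHZstate = quarticQ3 Wstate := by
    rw [← quartic_sloccAct g₁ g₂ g₃ GHZstate, h]
  have hW : quarticQ3 Wstate = 0 := by
    simp only [quarticQ3, Wstate]
    norm_num [Prod.ext_iff, Fin.ext_iff]
  have h2 : ((Real.sqrt 2 : ℝ) : ℂ) ^ 2 = 2 := by
    rw [← Complex.ofReal_pow, Real.sq_sqrt (by norm_num : (0:ℝ) ≤ 2)]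
    norm_num
  have hG : quarticQ3 GHZstate = -1/2 := by
    simp only [quarticQ3, GHZstate]
    norm_num [Prod.ext_iff, Fin.ext_iff]
    field_simp
    rw [show ((Real.sqrt 2 : ℝ) : ℂ) ^ 4 = (((Real.sqrt 2 : ℝ) : ℂ) ^ 2) ^ 2 by ring, h2]
  rw [hq, hW] at hG
  norm_num at hG
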